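/- arXiv:1812.03988 — 7 statements merged into one kernel-verified Lean document; each statement's English description precedes it below -/
import Mathlib

section
/- Let 𝒞 : L(ℝ³) → L(ℝ³) be a linear map on 3×3 real matrices, let F be a 3×3 real matrix with det F = 1, and let γ > 0 be such that 𝒞 is strongly elliptic at F with constant γ. Then for every nonzero vector m ∈ ℝ³, the linear map from ℝ³ × ℝ to ℝ³ × ℝ given by (a, ζ) ↦ ( 𝒞[a ⊗ m] m − ζ (Cof F) m , ((Cof F) m) · a ) is injective (equivalently, bijective). In particular the associated 4×4 Douglis–Nirenberg symbol matrix [[Q(F;m), −(Cof F)m],[((Cof F)m)·(·), 0]], where Q(F;m)a := 𝒞[a ⊗ m]m, has nonzero determinant. -/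
open Matrix

/-- The cofactor matrix: transpose of the adjugate. -/
noncomputable def Cof (F : Matrix (Fin 3) (Fin 3) ℝ) : Matrix (Fin 3) (Fin 3) ℝ :=
  (Matrix.adjugate F)ᵀ

lemma trace_vecMulVec_mul_transpose (a m : Fin 3 → ℝ) (B : Matrix (Fin 3) (Fin 3) ℝ) :
    Matrix.trace (vecMulVec a m * Bᵀ) = a ⬝ᵥ (B *ᵥ m) := by
  simp only [Matrix.trace, Matrix.diag, Matrix.mul_apply, vecMulVec_apply,
    Matrix.transpose_apply, dotProduct, Matrix.mulVec, Finset.mul_sum]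
  refine Finset.sum_congr rfl fun i _ => Finset.sum_congr rfl fun j _ => by ring

lemma cof_mulVec_ne_zero (F : Matrix (Fin 3) (Fin 3) ℝ) (hF : F.det = 1)
    (m : Fin 3 → ℝ) (hm : m ≠ 0) : Cof F *ᵥ m ≠ 0 := by
  intro h
  have hFt : Fᵀ * Cof F = 1 := by
    rw [Cof, ← Matrix.transpose_mul, Matrix.adjugate_mul, hF, one_smul, Matrix.transpose_one]
  have hmeq : m = 0 := by
    have h2 := congrArg (fun w => Fᵀ *ᵥ w) h
    simp only [Matrix.mulVec_mulVec, hFt, Matrix.one_mulVec, Matrix.mulVec_zero] at h2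
    exact h2
  exact hm hmeq

/-- Under strong ellipticity of `𝒞` at `F` (with `det F = 1`), the
Douglis–Nirenberg symbol map `(a, ζ) ↦ (𝒞[a ⊗ m] m − ζ (Cof F) m, ((Cof F) m) · a)`
is injective for every nonzero `m`. -/
theorem symbol_injective
    (𝒞 : Matrix (Fin 3) (Fin 3) ℝ →ₗ[ℝ] Matrix (Fin 3) (Fin 3) ℝ)
    (F : Matrix (Fin 3) (Fin 3) ℝ) (hF : F.det = 1)
    (γ : ℝ) (hγ : 0 < γ)
    (hSE : ∀ a c : Fin 3 → ℝ, a ⬝ᵥ (Cof F *ᵥ c) = 0 →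
      γ * (a ⬝ᵥ a) * (c ⬝ᵥ c) ≤ Matrix.trace (vecMulVec a c * (𝒞 (vecMulVec a c))ᵀ))
    (m : Fin 3 → ℝ) (hm : m ≠ 0) :
    Function.Injective (fun p : (Fin 3 → ℝ) × ℝ =>
      ((𝒞 (vecMulVec p.1 m)) *ᵥ m - p.2 • (Cof F *ᵥ m),
        (Cof F *ᵥ m) ⬝ᵥ p.1)) := by
  have hnn : ∀ w : Fin 3 → ℝ, 0 ≤ w ⬝ᵥ w :=
    fun w => Finset.sum_nonneg fun i _ => mul_self_nonneg _
  rintro ⟨a1, z1⟩ ⟨a2, z2⟩ h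
  simp only [Prod.mk.injEq] at h
  obtain ⟨h1, h2⟩ := h
  set v := Cof F *ᵥ m with hv
  set a := a1 - a2 with hadef
  have ha : a ⬝ᵥ v = 0 := by
    rw [hadef, sub_dotProduct]
    rw [dotProduct_comm a1 v, dotProduct_comm a2 v, h2, sub_self]
  have hvmv : vecMulVec a m = vecMulVec a1 m - vecMulVec a2 m := by
    ext i j; simp [vecMulVec, hadef]; ring
  have hB : 𝒞 (vecMulVec a m) *ᵥ m = (z1 - z2) • v := by
    rw [hvmv, map_sub, Matrix.sub_mulVec, sub_smul]
    have := sub_eq_sub_iff_sub_eq_sub.mp h1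
    exact this
  have hSE' := hSE a m ha
  rw [trace_vecMulVec_mul_transpose, hB] at hSE'
  have hdot : a ⬝ᵥ ((z1 - z2) • v) = 0 := by
    rw [dotProduct_smul, ha, smul_zero]
  rw [hdot] at hSE'
  have hmm : 0 < m ⬝ᵥ m := by
    rcases lt_or_eq_of_le (hnn m) with h | h
    · exact h
    · exact absurd ((dotProduct_self_eq_zero).mp h.symm) hm
  have haa : a ⬝ᵥ a = 0 := by
    by_contra hne
    have hpos : 0 < a ⬝ᵥ a := lt_of_le_of_ne (hnn a) (Ne.symm hne)
    exact absurd hSE' (not_le.mpr (mul_pos (mul_pos hγ hpos) hmm))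
  have ha0 : a = 0 := dotProduct_self_eq_zero.mp haa
  have hz : (z1 - z2) • v = 0 := by
    rw [← hB, ha0]
    have h0 : vecMulVec (0 : Fin 3 → ℝ) m = 0 := by ext i j; simp [vecMulVec]
    rw [h0, map_zero, Matrix.zero_mulVec]
  have hz0 : z1 - z2 = 0 := by
    by_contra hne
    exact cof_mulVec_ne_zero F hF m hm (by
      have := smul_eq_zero.mp hz
      rcases this with h | h
      · exact absurd h hne
      · exact h)
  have : a1 = a2 := by
    have := sub_eq_zero.mp ha0
    exact this
  exact Prod.ext this (sub_eq_zero.mp hz0)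
end

section
/- Let 𝒞 : L(ℝ³) → L(ℝ³) be a linear map on 3×3 real matrices and γ > 0 be such that 𝒞 is strongly elliptic at the identity I with constant γ, and for μ ∈ [0,1] set 𝒞_μ := μ 𝓘 + (1−μ) 𝒞, where 𝓘 is the identity map on 3×3 matrices. Then for every μ ∈ [0,1] and every nonzero m ∈ ℝ³, the linear map from ℝ³ × ℝ to ℝ³ × ℝ given by (a, ζ) ↦ ( 𝒞_μ[a ⊗ m] m − ζ m , m · a ) is injective (equivalently, bijective). -/
open Matrix

lemma dot_mulVec_trace (a m : Fin 3 → ℝ) (M : Matrix (Fin 3) (Fin 3) ℝ) :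
    a ⬝ᵥ (M *ᵥ m) = Matrix.trace (vecMulVec a m * Mᵀ) := by
  simp [dotProduct, mulVec, Matrix.trace, vecMulVec, Matrix.mul_apply, Matrix.diag,
    Fin.sum_univ_three]
  ring

lemma trace_vecMulVec_self (a m : Fin 3 → ℝ) :
    Matrix.trace (vecMulVec a m * (vecMulVec a m)ᵀ) = (a ⬝ᵥ a) * (m ⬝ᵥ m) := by
  simp [dotProduct, Matrix.trace, vecMulVec, Matrix.mul_apply, Matrix.diag,
    Fin.sum_univ_three]
  ring

lemma vecMulVec_sub (a b m : Fin 3 → ℝ) :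
    vecMulVec (a - b) m = vecMulVec a m - vecMulVec b m := by
  ext i j; simp [vecMulVec, sub_mul]

lemma dot_self_pos {n : ℕ} {a : Fin n → ℝ} (ha : a ≠ 0) : 0 < a ⬝ᵥ a := by
  have h0 : 0 ≤ a ⬝ᵥ a := by
    simp only [dotProduct]
    exact Finset.sum_nonneg fun i _ => mul_self_nonneg _
  rcases h0.lt_or_eq with h | h
  · exact h
  · exact absurd (dotProduct_self_eq_zero.mp h.symm) ha

/-- If `𝒞` is strongly elliptic at the identity with constant `γ > 0`,
then for each `μ ∈ [0,1]` the symbol map of `𝒞_μ := μ 𝓘 + (1−μ) 𝒞`, namely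
`(a, ζ) ↦ (𝒞_μ[a ⊗ m] m − ζ m, m · a)`, is injective for every nonzero `m`. -/
theorem symbol_injective_homotopy
    (𝒞 : Matrix (Fin 3) (Fin 3) ℝ →ₗ[ℝ] Matrix (Fin 3) (Fin 3) ℝ)
    (γ : ℝ) (hγ : 0 < γ)
    (hSE : ∀ a c : Fin 3 → ℝ, a ⬝ᵥ c = 0 →
      γ * (a ⬝ᵥ a) * (c ⬝ᵥ c) ≤ Matrix.trace (vecMulVec a c * (𝒞 (vecMulVec a c))ᵀ))
    (μ : ℝ) (hμ : μ ∈ Set.Icc (0 : ℝ) 1)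
    (m : Fin 3 → ℝ) (hm : m ≠ 0) :
    Function.Injective (fun p : (Fin 3 → ℝ) × ℝ =>
      ((μ • vecMulVec p.1 m + (1 - μ) • 𝒞 (vecMulVec p.1 m)) *ᵥ m - p.2 • m,
        m ⬝ᵥ p.1)) := by
  obtain ⟨hμ0, hμ1⟩ := hμ
  have key : ∀ (a : Fin 3 → ℝ) (ζ : ℝ),
      (μ • vecMulVec a m + (1 - μ) • 𝒞 (vecMulVec a m)) *ᵥ m = ζ • m →
      m ⬝ᵥ a = 0 → a = 0 ∧ ζ = 0 := by
    intro a ζ h1 h2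
    have ham : a ⬝ᵥ m = 0 := by rwa [dotProduct_comm] at h2
    have hmm : 0 < m ⬝ᵥ m := dot_self_pos hm
    have haz : a = 0 := by
      by_contra ha
      have haa : 0 < a ⬝ᵥ a := dot_self_pos ha
      have hdot : a ⬝ᵥ ((μ • vecMulVec a m + (1 - μ) • 𝒞 (vecMulVec a m)) *ᵥ m)
          = ζ * (a ⬝ᵥ m) := by rw [h1, dotProduct_smul]; rfl
      rw [ham, mul_zero, dot_mulVec_trace] at hdot
      have expand : Matrix.trace (vecMulVec a m *
          (μ • vecMulVec a m + (1 - μ) • 𝒞 (vecMulVec a m))ᵀ)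
          = μ * ((a ⬝ᵥ a) * (m ⬝ᵥ m))
            + (1 - μ) * Matrix.trace (vecMulVec a m * (𝒞 (vecMulVec a m))ᵀ) := by
        rw [Matrix.transpose_add, Matrix.transpose_smul, Matrix.transpose_smul,
          Matrix.mul_add, Matrix.mul_smul, Matrix.mul_smul, Matrix.trace_add,
          Matrix.trace_smul, Matrix.trace_smul, trace_vecMulVec_self]
        simp
      have hSE' := hSE a m ham
      have hc : 0 < μ + (1 - μ) * γ := by
        rcases hμ0.lt_or_eq with h | h
        · have : 0 ≤ (1 - μ) * γ := mul_nonneg (by linarith) hγ.le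
          linarith
        · rw [← h]; simpa using hγ
      have h2' : (1 - μ) * (γ * (a ⬝ᵥ a) * (m ⬝ᵥ m))
          ≤ (1 - μ) * Matrix.trace (vecMulVec a m * (𝒞 (vecMulVec a m))ᵀ) :=
        mul_le_mul_of_nonneg_left hSE' (by linarith)
      rw [expand] at hdot
      nlinarith [mul_pos hc (mul_pos haa hmm)]
    refine ⟨haz, ?_⟩
    have hA : vecMulVec (0 : Fin 3 → ℝ) m = 0 := by ext i j; simp [vecMulVec]
    rw [haz, hA] at h1
    simp at h1
    exact (smul_eq_zero.mp h1.symm).resolve_right hm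
  intro p q h
  simp only [Prod.mk.injEq] at h
  obtain ⟨h1, h2⟩ := h
  set a := p.1 - q.1 with ha
  set ζ := p.2 - q.2 with hζ
  have e1 : (μ • vecMulVec a m + (1 - μ) • 𝒞 (vecMulVec a m)) *ᵥ m = ζ • m := by
    rw [ha, hζ, vecMulVec_sub, map_sub]
    have hsplit : μ • (vecMulVec p.1 m - vecMulVec q.1 m)
        + (1 - μ) • (𝒞 (vecMulVec p.1 m) - 𝒞 (vecMulVec q.1 m))
        = (μ • vecMulVec p.1 m + (1 - μ) • 𝒞 (vecMulVec p.1 m))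
          - (μ • vecMulVec q.1 m + (1 - μ) • 𝒞 (vecMulVec q.1 m)) := by
      module
    rw [hsplit, Matrix.sub_mulVec]
    rw [sub_eq_sub_iff_sub_eq_sub] at h1
    rw [h1, sub_smul]
  have e2 : m ⬝ᵥ a = 0 := by
    rw [ha, dotProduct_sub, h2, sub_self]
  obtain ⟨ea, eζ⟩ := key a ζ e1 e2
  exact Prod.ext (sub_eq_zero.mp ea) (sub_eq_zero.mp eζ)
end

section
/- (Peetre's lemma, used to deduce the semi-Fredholm property from the a-priori elliptic estimates.) Let X, Y, Z be real Banach spaces, T : X → Y a bounded linear operator, K : X → Z a compact bounded linear operator, and C > 0 a constant such that ‖x‖_X ≤ C ( ‖T x‖_Y + ‖K x‖_Z ) for all x ∈ X. Then the kernel of T is finite-dimensional and the range of T is a closed subspace of Y. -/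
/-- If the distances of a sequence `a` are dominated by those of a Cauchy sequence `b`,
then `a` is Cauchy. -/
lemma cauchySeq_of_dist_le_cauchySeq {A B : Type*} [PseudoMetricSpace A] [PseudoMetricSpace B]
    {a : ℕ → A} {b : ℕ → B} (L : ℝ)
    (h : ∀ m n, dist (a m) (a n) ≤ L * dist (b m) (b n)) (hb : CauchySeq b) : CauchySeq a := by
  rw [Metric.cauchySeq_iff] at hb ⊢
  intro ε hε
  have hL : (0:ℝ) < max L 1 := lt_max_of_lt_right one_pos
  obtain ⟨N, hN⟩ := hb (ε / max L 1) (by positivity)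
  refine ⟨N, fun m hm n hn => ?_⟩
  calc dist (a m) (a n) ≤ L * dist (b m) (b n) := h m n
    _ ≤ max L 1 * dist (b m) (b n) :=
        mul_le_mul_of_nonneg_right (le_max_left _ _) dist_nonneg
    _ < max L 1 * (ε / max L 1) := by
        exact mul_lt_mul_of_pos_left (hN m hm n hn) hL
    _ = ε := by field_simp

/-- A compact operator maps norm-bounded sequences to sequences with a Cauchy subsequence. -/
lemma IsCompactOperator.exists_cauchy_subseq {X Z : Type*}
    [NormedAddCommGroup X] [NormedSpace ℝ X] [NormedAddCommGroup Z] [NormedSpace ℝ Z]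
    (K : X →L[ℝ] Z) (hK : IsCompactOperator K) (u : ℕ → X) (hu : ∀ n, ‖u n‖ ≤ 1) :
    ∃ φ : ℕ → ℕ, StrictMono φ ∧ CauchySeq (fun n => K (u (φ n))) := by
  obtain ⟨M, hMc, hM⟩ := hK.image_closedBall_subset_compact 1
  have hmem : ∀ n, K (u n) ∈ M := fun n =>
    hM ⟨u n, by simpa [Metric.mem_closedBall, dist_eq_norm] using hu n, rfl⟩
  obtain ⟨z, _, φ, hφ, hconv⟩ := hMc.tendsto_subseq hmem
  exact ⟨φ, hφ, hconv.cauchySeq⟩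

/-- Peetre's lemma: if `‖x‖ ≤ C (‖T x‖ + ‖K x‖)` for a bounded
operator `T` and a compact operator `K`, then `ker T` is finite-dimensional and
`range T` is closed. -/
theorem peetre_lemma
    {X Y Z : Type*} [NormedAddCommGroup X] [NormedSpace ℝ X] [CompleteSpace X]
    [NormedAddCommGroup Y] [NormedSpace ℝ Y] [CompleteSpace Y]
    [NormedAddCommGroup Z] [NormedSpace ℝ Z] [CompleteSpace Z]
    (T : X →L[ℝ] Y) (K : X →L[ℝ] Z) (hK : IsCompactOperator K)
    (C : ℝ) (hC : 0 < C)
    (hest : ∀ x : X, ‖x‖ ≤ C * (‖T x‖ + ‖K x‖)) :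
    FiniteDimensional ℝ (LinearMap.ker (T : X →ₗ[ℝ] Y)) ∧ IsClosed (Set.range T) := by
  have hkerclosed : IsClosed ((LinearMap.ker (T : X →ₗ[ℝ] Y) : Submodule ℝ X) : Set X) :=
    ContinuousLinearMap.isClosed_ker T
  haveI : CompleteSpace (LinearMap.ker (T : X →ₗ[ℝ] Y)) := hkerclosed.completeSpace_coe
  -- Part 1 : `ker T` is finite dimensional.
  have hker : FiniteDimensional ℝ (LinearMap.ker (T : X →ₗ[ℝ] Y)) := by
    apply FiniteDimensional.of_isCompact_closedBall₀ ℝ (one_pos)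
    rw [isCompact_iff_isSeqCompact]
    intro u hu
    have hnorm : ∀ n, ‖((u n : X))‖ ≤ 1 := by
      intro n
      have := hu n
      simpa [Metric.mem_closedBall, dist_eq_norm] using this
    obtain ⟨φ, hφ, hcauchy⟩ := IsCompactOperator.exists_cauchy_subseq K hK
      (fun n => (u n : X)) hnorm
    have hTzero : ∀ n, T ((u n : X)) = 0 := fun n => (u n).2
    have hca : CauchySeq (fun n => u (φ n)) := by
      apply cauchySeq_of_dist_le_cauchySeq C _ hcauchy
      intro m n
      have : dist (u (φ m)) (u (φ n)) = ‖((u (φ m) : X)) - (u (φ n) : X)‖ := by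
        rw [Subtype.dist_eq, dist_eq_norm]
      rw [this, dist_eq_norm]
      calc ‖((u (φ m) : X)) - (u (φ n) : X)‖
          ≤ C * (‖T ((u (φ m) : X) - (u (φ n) : X))‖ + ‖K ((u (φ m) : X) - (u (φ n) : X))‖) :=
            hest _
        _ = C * ‖K (u (φ m)) - K (u (φ n))‖ := by
            rw [map_sub, map_sub, hTzero, hTzero, sub_zero, norm_zero, zero_add]
    obtain ⟨x, hx⟩ := cauchySeq_tendsto_of_complete hca
    refine ⟨x, ?_, φ, hφ, hx⟩
    exact Metric.isClosed_closedBall.mem_of_tendsto hx (Filter.Eventually.of_forall fun n => hu (φ n))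
  refine ⟨hker, ?_⟩
  -- Part 2 : the range of `T` is closed.
  haveI := hker
  obtain ⟨W, hWclosed, hWcompl⟩ :=
    (Submodule.ClosedComplemented.of_finiteDimensional
      (𝕜 := ℝ) (LinearMap.ker (T : X →ₗ[ℝ] Y))).exists_isClosed_isCompl
  haveI : CompleteSpace W := hWclosed.completeSpace_coe
  -- key lower bound on `W`
  have hbound : ∃ c : NNReal, ∀ w : W, ‖(w : X)‖ ≤ c * ‖T (w : X)‖ := by
    by_contra hcon
    push_neg at hcon
    have hex : ∀ n : ℕ, ∃ w : W, ((n : ℝ) + 1) * ‖T (w : X)‖ < ‖(w : X)‖ := by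
      intro n
      obtain ⟨w, hw⟩ := hcon (n + 1)
      refine ⟨w, ?_⟩
      have : (((n + 1 : NNReal)) : ℝ) = (n : ℝ) + 1 := by push_cast; ring
      rwa [this] at hw
    choose w hw using hex
    have hwpos : ∀ n, (0:ℝ) < ‖(w n : X)‖ := by
      intro n
      rcases (norm_nonneg ((w n : X))).lt_or_eq with h | h
      · exact h
      · exfalso
        have := hw n
        rw [← h] at this
        have h2 : (0:ℝ) ≤ ((n : ℝ) + 1) * ‖T ((w n : X))‖ := by positivity
        linarith
    set u : ℕ → W := fun n => (‖(w n : X)‖)⁻¹ • w n with hu_def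
    have hucoe : ∀ n, ((u n : X)) = (‖(w n : X)‖)⁻¹ • (w n : X) := fun n => rfl
    have hunorm : ∀ n, ‖((u n : X))‖ = 1 := by
      intro n
      rw [hucoe, norm_smul, norm_inv, norm_norm, inv_mul_cancel₀ (hwpos n).ne']
    have hTu : Filter.Tendsto (fun n => T ((u n : X))) Filter.atTop (nhds 0) := by
      rw [tendsto_zero_iff_norm_tendsto_zero]
      have hb : ∀ n : ℕ, ‖T ((u n : X))‖ ≤ 1 / ((n : ℝ) + 1) := by
        intro n
        rw [hucoe, map_smul, norm_smul, norm_inv, norm_norm]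
        rw [inv_mul_le_iff₀ (hwpos n), mul_one_div, le_div_iff₀ (by positivity)]
        nlinarith [hw n]
      exact squeeze_zero (fun n => norm_nonneg _) hb tendsto_one_div_add_atTop_nhds_zero_nat
    obtain ⟨φ, hφ, hKcauchy⟩ := IsCompactOperator.exists_cauchy_subseq K hK
      (fun n => (u n : X)) (fun n => (hunorm n).le)
    have hTcauchy : CauchySeq (fun n => T ((u (φ n) : X))) :=
      (hTu.comp hφ.tendsto_atTop).cauchySeq
    have hprod : CauchySeq (fun n => (T ((u (φ n) : X)), K ((u (φ n) : X)))) :=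
      hTcauchy.prodMk hKcauchy
    have hca : CauchySeq (fun n => u (φ n)) := by
      apply cauchySeq_of_dist_le_cauchySeq (2 * C) _ hprod
      intro m n
      have hd : dist (u (φ m)) (u (φ n)) = ‖((u (φ m) : X)) - (u (φ n) : X)‖ := by
        rw [Subtype.dist_eq, dist_eq_norm]
      rw [hd]
      have hTd : ‖T ((u (φ m) : X)) - T ((u (φ n) : X))‖ ≤
          dist (T ((u (φ m) : X)), K ((u (φ m) : X))) (T ((u (φ n) : X)), K ((u (φ n) : X))) := by
        rw [← dist_eq_norm]
        exact le_max_left _ _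
      have hKd : ‖K ((u (φ m) : X)) - K ((u (φ n) : X))‖ ≤
          dist (T ((u (φ m) : X)), K ((u (φ m) : X))) (T ((u (φ n) : X)), K ((u (φ n) : X))) := by
        rw [← dist_eq_norm]
        exact le_max_right _ _
      calc ‖((u (φ m) : X)) - (u (φ n) : X)‖
          ≤ C * (‖T ((u (φ m) : X) - (u (φ n) : X))‖ + ‖K ((u (φ m) : X) - (u (φ n) : X))‖) :=
            hest _
        _ = C * (‖T ((u (φ m) : X)) - T ((u (φ n) : X))‖ +
              ‖K ((u (φ m) : X)) - K ((u (φ n) : X))‖) := by rw [map_sub, map_sub]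
        _ ≤ 2 * C * dist (T ((u (φ m) : X)), K ((u (φ m) : X)))
              (T ((u (φ n) : X)), K ((u (φ n) : X))) := by
            have hd0 : (0:ℝ) ≤ dist (T ((u (φ m) : X)), K ((u (φ m) : X)))
              (T ((u (φ n) : X)), K ((u (φ n) : X))) := dist_nonneg
            nlinarith [hTd, hKd, hC.le]
    obtain ⟨v, hv⟩ := cauchySeq_tendsto_of_complete hca
    have hvX : Filter.Tendsto (fun n => ((u (φ n) : X))) Filter.atTop (nhds (v : X)) :=
      (continuous_subtype_val.tendsto _).comp hv
    have hvnorm : ‖(v : X)‖ = 1 := by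
      have := ((continuous_norm.tendsto _).comp hvX)
      have h2 : Filter.Tendsto (fun n => ‖((u (φ n) : X))‖) Filter.atTop (nhds ‖(v : X)‖) := this
      have h3 : Filter.Tendsto (fun _ : ℕ => (1:ℝ)) Filter.atTop (nhds ‖(v : X)‖) := by
        simpa [hunorm] using h2
      exact tendsto_nhds_unique h3 tendsto_const_nhds
    have hTv : T (v : X) = 0 := by
      have h1 : Filter.Tendsto (fun n => T ((u (φ n) : X))) Filter.atTop (nhds (T (v : X))) :=
        (T.continuous.tendsto _).comp hvX
      have h2 : Filter.Tendsto (fun n => T ((u (φ n) : X))) Filter.atTop (nhds 0) :=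
        hTu.comp hφ.tendsto_atTop
      exact tendsto_nhds_unique h1 h2
    have hvker : (v : X) ∈ LinearMap.ker (T : X →ₗ[ℝ] Y) := hTv
    have hvzero : (v : X) = 0 := by
      have := hWcompl.disjoint
      have hmem : (v : X) ∈ (LinearMap.ker (T : X →ₗ[ℝ] Y) ⊓ W : Submodule ℝ X) := ⟨hvker, v.2⟩
      rw [this.eq_bot] at hmem
      simpa using hmem
    rw [hvzero, norm_zero] at hvnorm
    exact one_ne_zero hvnorm.symm
  obtain ⟨c, hc⟩ := hbound
  set S : W →L[ℝ] Y := T.comp (Submodule.subtypeL W) with hS_def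
  have hS : ∀ w : W, ‖w‖ ≤ c * ‖S w‖ := by
    intro w
    have : ‖w‖ = ‖(w : X)‖ := rfl
    rw [this]
    exact hc w
  have hanti : AntilipschitzWith c S := ContinuousLinearMap.antilipschitz_of_bound S hS
  have hrange : IsClosed (Set.range S) := hanti.isClosed_range S.uniformContinuous
  have : Set.range T = Set.range S := by
    ext y
    constructor
    · rintro ⟨x, rfl⟩
      have hx : x ∈ (LinearMap.ker (T : X →ₗ[ℝ] Y) ⊔ W : Submodule ℝ X) := by
        rw [hWcompl.codisjoint.eq_top]; trivial
      obtain ⟨p, hp, q, hq, rfl⟩ := Submodule.mem_sup.mp hx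
      refine ⟨⟨q, hq⟩, ?_⟩
      simp only [hS_def, ContinuousLinearMap.comp_apply, Submodule.subtypeL_apply, map_add]
      rw [show T p = 0 from LinearMap.mem_ker.mp hp, zero_add]
    · rintro ⟨w, rfl⟩
      exact ⟨w, rfl⟩
  rw [this]
  exact hrange
end

section
/- Let 𝔛 be a connected metric space containing at least two points, let 𝔄 ⊆ 𝔛 be a connected subset, and let 𝔅 be a connected component of 𝔛 \ 𝔄. Then 𝔛 \ 𝔅 is connected. -/
open Set

/-- Core step: a contradiction from the connected ambient space being covered by
the two "separating" opens `U ∪ u` and `V ∩ v`. -/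
private lemma core_step {X : Type*} [TopologicalSpace X] [ConnectedSpace X]
    {B u v U V : Set X} (hu : IsOpen u) (hv : IsOpen v) (hU : IsOpen U) (hV : IsOpen V)
    (hBne : B.Nonempty)
    (hcov : Bᶜ ⊆ u ∪ v) (hempty : Bᶜ ∩ (u ∩ v) = ∅)
    (hBU : B ⊆ U)
    (hScov : B ∪ (Bᶜ ∩ v) ⊆ U ∪ V)
    (hV' : ((B ∪ (Bᶜ ∩ v)) ∩ V).Nonempty)
    (htriple : (B ∪ (Bᶜ ∩ v)) ∩ (U ∩ V) = ∅) : False := by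
  have hpre : IsPreconnected (univ : Set X) := isPreconnected_univ
  have h1 : (univ : Set X) ⊆ (U ∪ u) ∪ (V ∩ v) := by
    intro z _
    by_cases hzB : z ∈ B
    · exact Or.inl (Or.inl (hBU hzB))
    · rcases hcov hzB with hzu | hzv
      · exact Or.inl (Or.inr hzu)
      · have hzS : z ∈ B ∪ (Bᶜ ∩ v) := Or.inr ⟨hzB, hzv⟩
        rcases hScov hzS with hzU | hzV
        · exact Or.inl (Or.inl hzU)
        · exact Or.inr ⟨hzV, hzv⟩
  have h2 : (univ ∩ (U ∪ u) : Set X).Nonempty := by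
    obtain ⟨b, hb⟩ := hBne
    exact ⟨b, mem_univ b, Or.inl (hBU hb)⟩
  have h3 : (univ ∩ (V ∩ v) : Set X).Nonempty := by
    obtain ⟨q, hqS, hqV⟩ := hV'
    rcases hqS with hqB | ⟨hqBc, hqv⟩
    · exact absurd (show q ∈ (B ∪ (Bᶜ ∩ v)) ∩ (U ∩ V) from ⟨Or.inl hqB, hBU hqB, hqV⟩)
        (by rw [htriple]; exact notMem_empty q)
    · exact ⟨q, mem_univ q, hqV, hqv⟩
  obtain ⟨y, -, hy1, hyV, hyv⟩ :=
    hpre (U ∪ u) (V ∩ v) (hU.union hu) (hV.inter hv) h1 h2 h3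
  rcases hy1 with hyU | hyu
  · by_cases hyB : y ∈ B
    · exact absurd (show y ∈ (B ∪ (Bᶜ ∩ v)) ∩ (U ∩ V) from ⟨Or.inl hyB, hyU, hyV⟩)
        (by rw [htriple]; exact notMem_empty y)
    · by_cases hyu' : y ∈ u
      · exact absurd (show y ∈ Bᶜ ∩ (u ∩ v) from ⟨hyB, hyu', hyv⟩)
          (by rw [hempty]; exact notMem_empty y)
      · exact absurd (show y ∈ (B ∪ (Bᶜ ∩ v)) ∩ (U ∩ V) from ⟨Or.inr ⟨hyB, hyv⟩, hyU, hyV⟩)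
          (by rw [htriple]; exact notMem_empty y)
  · by_cases hyB : y ∈ B
    · exact absurd (show y ∈ (B ∪ (Bᶜ ∩ v)) ∩ (U ∩ V) from ⟨Or.inl hyB, hBU hyB, hyV⟩)
        (by rw [htriple]; exact notMem_empty y)
    · exact absurd (show y ∈ Bᶜ ∩ (u ∩ v) from ⟨hyB, hyu, hyv⟩)
        (by rw [hempty]; exact notMem_empty y)

/-- If `B` is the connected component of `x` in `Aᶜ`, `A ⊆ u`, the opens `u, v`
cover `Bᶜ` with `Bᶜ ∩ u ∩ v = ∅`, then `Bᶜ ∩ v` is empty. -/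
private lemma mid_step {X : Type*} [TopologicalSpace X] [ConnectedSpace X]
    {A : Set X} {x : X} (hx : x ∈ Aᶜ) {B : Set X} (hBdef : B = connectedComponentIn Aᶜ x)
    {u v : Set X} (hu : IsOpen u) (hv : IsOpen v) (hcov : Bᶜ ⊆ u ∪ v)
    (hAu : A ⊆ u) (hempty : Bᶜ ∩ (u ∩ v) = ∅)
    (hQne : (Bᶜ ∩ v).Nonempty) : False := by
  set Q : Set X := Bᶜ ∩ v with hQ
  have hxB : x ∈ B := hBdef ▸ mem_connectedComponentIn hx
  have hBne : B.Nonempty := ⟨x, hxB⟩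
  have hBpre : IsPreconnected B := hBdef ▸ isPreconnected_connectedComponentIn
  have hBA : B ⊆ Aᶜ := hBdef ▸ connectedComponentIn_subset _ _
  -- `B ∪ Q` is preconnected
  have hSpre : IsPreconnected (B ∪ Q) := by
    intro U V hU hV hScov hne1 hne2
    by_contra htrip
    have htriple : (B ∪ Q) ∩ (U ∩ V) = ∅ := not_nonempty_iff_eq_empty.mp htrip
    have hBUV : B ⊆ U ∪ V := fun z hz => hScov (Or.inl hz)
    have hBcase : B ⊆ U ∨ B ⊆ V := by
      by_contra hc
      push_neg at hc
      obtain ⟨hc1, hc2⟩ := hc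
      obtain ⟨p, hpB, hpV⟩ := not_subset.mp hc1
      obtain ⟨q', hqB, hqU⟩ := not_subset.mp hc2
      have hp : p ∈ V := (hBUV hpB).resolve_left hpV
      have hq : q' ∈ U := (hBUV hqB).resolve_right hqU
      obtain ⟨y, hyB, hyU, hyV⟩ := hBpre U V hU hV hBUV ⟨q', hqB, hq⟩ ⟨p, hpB, hp⟩
      exact absurd (show y ∈ (B ∪ Q) ∩ (U ∩ V) from ⟨Or.inl hyB, hyU, hyV⟩)
        (by rw [htriple]; exact notMem_empty y)
    rcases hBcase with hBU | hBV
    · exact core_step hu hv hU hV hBne hcov hempty hBU hScov hne2 htriple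
    · refine core_step hu hv hV hU hBne hcov hempty hBV ?_ hne1 ?_
      · rw [union_comm U V] at hScov; exact hScov
      · rw [inter_comm V U]; exact htriple
  -- maximality of the component
  have hSsub : B ∪ Q ⊆ Aᶜ := by
    rintro z (hz | ⟨hzBc, hzv⟩)
    · exact hBA hz
    · intro hzA
      exact absurd (show z ∈ Bᶜ ∩ (u ∩ v) from ⟨hzBc, hAu hzA, hzv⟩)
        (by rw [hempty]; exact notMem_empty z)
  have hSB : B ∪ Q ⊆ connectedComponentIn Aᶜ x :=
    hSpre.subset_connectedComponentIn (Or.inl hxB) hSsub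
  obtain ⟨q, hqBc, hqv⟩ := hQne
  have hqB : q ∈ B := by rw [hBdef]; exact hSB (Or.inr ⟨hqBc, hqv⟩)
  exact hqBc hqB

/-- Dieudonné: in a connected metric space `𝔛` with at least two
points, if `𝔄` is a connected subset and `𝔅` is a connected component of
`𝔛 \ 𝔄`, then `𝔛 \ 𝔅` is connected. -/
theorem complement_of_component_connected
    {𝔛 : Type*} [MetricSpace 𝔛] [ConnectedSpace 𝔛] [Nontrivial 𝔛]
    (𝔄 : Set 𝔛) (h𝔄 : IsConnected 𝔄)
    (𝔅 : Set 𝔛) (h𝔅 : ∃ x ∈ 𝔄ᶜ, 𝔅 = connectedComponentIn 𝔄ᶜ x) :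
    IsConnected 𝔅ᶜ := by
  obtain ⟨x, hx, hBdef⟩ := h𝔅
  have hBA : 𝔅 ⊆ 𝔄ᶜ := hBdef ▸ connectedComponentIn_subset _ _
  have hAsub : 𝔄 ⊆ 𝔅ᶜ := fun a ha hb => hBA hb ha
  obtain ⟨a, ha⟩ := h𝔄.nonempty
  refine ⟨⟨a, hAsub ha⟩, ?_⟩
  intro u v hu hv hcov hne1 hne2
  by_contra htrip
  have hempty : 𝔅ᶜ ∩ (u ∩ v) = ∅ := not_nonempty_iff_eq_empty.mp htrip
  have hAUV : 𝔄 ⊆ u ∪ v := fun z hz => hcov (hAsub hz)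
  have hAcase : 𝔄 ⊆ u ∨ 𝔄 ⊆ v := by
    by_contra hc
    push_neg at hc
    obtain ⟨hc1, hc2⟩ := hc
    obtain ⟨p, hpA, hpu⟩ := not_subset.mp hc1
    obtain ⟨q', hqA, hqv⟩ := not_subset.mp hc2
    have hp : p ∈ v := (hAUV hpA).resolve_left hpu
    have hq : q' ∈ u := (hAUV hqA).resolve_right hqv
    obtain ⟨y, hyA, hyu, hyv⟩ := h𝔄.isPreconnected u v hu hv hAUV ⟨q', hqA, hq⟩ ⟨p, hpA, hp⟩
    exact absurd (show y ∈ 𝔅ᶜ ∩ (u ∩ v) from ⟨hAsub hyA, hyu, hyv⟩)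
      (by rw [hempty]; exact notMem_empty y)
  rcases hAcase with hAu | hAv
  · exact mid_step hx hBdef hu hv hcov hAu hempty hne2
  · refine mid_step hx hBdef hv hu ?_ hAv ?_ hne1
    · rw [union_comm v u]; exact hcov
    · rw [inter_comm v u]; exact hempty
end

section
/- Let Z be a connected metric space, z ∈ Z, and let C⁺ and C⁻ be connected components of Z \ {z}. Suppose there is an open neighborhood U of z in Z such that U \ {z} ⊆ C⁺ ∪ C⁻. Then Z \ {z} has no connected components other than C⁺ and C⁻; that is, Z \ {z} = C⁺ ∪ C⁻. -/
/-- Workhorse: in a preconnected space, if `O ⊆ {z}ᶜ` is open with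
`closure O ⊆ O ∪ {z}`, `u, v` are open sets covering `O` with
`O ∩ (u ∩ v) = ∅`, and all points of `U ∩ O` (for `U` an open
neighborhood of `z`) lie in `u`, then `O ∩ v = ∅`. -/
lemma punctured_workhorse {Z : Type*} [TopologicalSpace Z] [PreconnectedSpace Z] {z : Z}
    {O u v U : Set Z} (hO : IsOpen O) (hOz : O ⊆ ({z}ᶜ : Set Z))
    (hclO : closure O ⊆ O ∪ {z})
    (hu : IsOpen u) (hv : IsOpen v) (hcov : O ⊆ u ∪ v)
    (hdisj : O ∩ (u ∩ v) = ∅)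
    (hU : IsOpen U) (hzU : z ∈ U) (hUO : U ∩ O ⊆ u) :
    O ∩ v = ∅ := by
  have hclosed : IsClosed (O ∩ v) := by
    apply isClosed_of_closure_subset
    intro q hq
    have hqO : q ∈ closure O := closure_mono Set.inter_subset_left hq
    rcases hclO hqO with hqO' | hqz
    · rcases hcov hqO' with hqu | hqv
      · exfalso
        obtain ⟨w, hwu, hwO, hwv⟩ := mem_closure_iff.mp hq u hu hqu
        have : w ∈ O ∩ (u ∩ v) := ⟨hwO, hwu, hwv⟩
        rw [hdisj] at this; exact this
      · exact ⟨hqO', hqv⟩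
    · exfalso
      have hqU : q ∈ U := by rw [Set.mem_singleton_iff] at hqz; rw [hqz]; exact hzU
      obtain ⟨w, hwU, hwO, hwv⟩ := mem_closure_iff.mp hq U hU hqU
      have hwu : w ∈ u := hUO ⟨hwU, hwO⟩
      have : w ∈ O ∩ (u ∩ v) := ⟨hwO, hwu, hwv⟩
      rw [hdisj] at this; exact this
  have hopen : IsOpen (O ∩ v) := hO.inter hv
  rcases isClopen_iff.mp ⟨hclosed, hopen⟩ with h | h
  · exact h
  · exfalso
    have : z ∈ O ∩ v := by rw [h]; trivial
    exact hOz this.1 rfl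

/-- Side choice: a preconnected subset of `O` is contained in `u` or in `v`. -/
lemma punctured_side_choice {Z : Type*} [TopologicalSpace Z]
    {C O u v : Set Z} (hC : IsPreconnected C) (hCO : C ⊆ O)
    (hu : IsOpen u) (hv : IsOpen v) (hcov : O ⊆ u ∪ v)
    (hdisj : O ∩ (u ∩ v) = ∅) :
    C ⊆ u ∨ C ⊆ v := by
  by_cases h1 : (C ∩ u).Nonempty
  · by_cases h2 : (C ∩ v).Nonempty
    · exfalso
      obtain ⟨w, hwC, hwu, hwv⟩ := hC u v hu hv (fun y hy => hcov (hCO hy)) h1 h2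
      have : w ∈ O ∩ (u ∩ v) := ⟨hCO hwC, hwu, hwv⟩
      rw [hdisj] at this; exact this
    · left
      intro y hy
      rcases hcov (hCO hy) with h | h
      · exact h
      · exact absurd ⟨y, hy, h⟩ h2
  · right
    intro y hy
    rcases hcov (hCO hy) with h | h
    · exact absurd ⟨y, hy, h⟩ h1
    · exact h

/-- Mixed case: if `u, v` openly split `{z}ᶜ`, the component `C` of `x` lies in `u`,
and all points of `U ∩ {z}ᶜ ∩ u` lie in `C`, then `{z}ᶜ ∩ u ⊆ C`. -/
lemma punctured_mixed {Z : Type*} [TopologicalSpace Z] [T1Space Z] [PreconnectedSpace Z] {z x : Z}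
    (hx : x ∈ ({z}ᶜ : Set Z)) {u v U : Set Z}
    (hu : IsOpen u) (hv : IsOpen v)
    (hcov : ({z}ᶜ : Set Z) ⊆ u ∪ v)
    (hdisj : ({z}ᶜ : Set Z) ∩ (u ∩ v) = ∅)
    (hU : IsOpen U) (hzU : z ∈ U)
    (hCu : connectedComponentIn ({z}ᶜ : Set Z) x ⊆ u)
    (hUu : U ∩ ({z}ᶜ : Set Z) ∩ u ⊆ connectedComponentIn ({z}ᶜ : Set Z) x) :
    ({z}ᶜ : Set Z) ∩ u ⊆ connectedComponentIn ({z}ᶜ : Set Z) x := by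
  set C := connectedComponentIn ({z}ᶜ : Set Z) x with hCdef
  set O : Set Z := ({z}ᶜ : Set Z) ∩ u with hOdef
  have hOopen : IsOpen O := isOpen_compl_singleton.inter hu
  have hOz : O ⊆ ({z}ᶜ : Set Z) := Set.inter_subset_left
  have hCY : C ⊆ ({z}ᶜ : Set Z) := connectedComponentIn_subset _ _
  have hxC : x ∈ C := mem_connectedComponentIn hx
  have hCO : C ⊆ O := fun y hy => ⟨hCY hy, hCu hy⟩
  -- closure O ⊆ O ∪ {z}
  have hclO : closure O ⊆ O ∪ {z} := by
    intro q hq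
    by_cases hqz : q = z
    · right; exact hqz
    · have hqY : q ∈ ({z}ᶜ : Set Z) := hqz
      rcases hcov hqY with hqu | hqv
      · exact Or.inl ⟨hqY, hqu⟩
      · exfalso
        obtain ⟨w, hwv, hwO⟩ := mem_closure_iff.mp hq v hv hqv
        have : w ∈ ({z}ᶜ : Set Z) ∩ (u ∩ v) := ⟨hwO.1, hwO.2, hwv⟩
        rw [hdisj] at this; exact this
  -- O is preconnected
  have hOpre : IsPreconnected O := by
    intro u' v' hu' hv' hcov' h1 h2
    by_contra hne
    have hd' : O ∩ (u' ∩ v') = ∅ := Set.not_nonempty_iff_eq_empty.mp hne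
    rcases punctured_side_choice (isPreconnected_connectedComponentIn) hCO hu' hv' hcov' hd' with hs | hs
    · have : O ∩ v' = ∅ := by
        apply punctured_workhorse hOopen hOz hclO hu' hv' hcov' hd' hU hzU
        intro w hw
        exact hs (hUu ⟨⟨hw.1, hw.2.1⟩, hw.2.2⟩)
      rw [this] at h2; exact Set.not_nonempty_empty h2
    · have : O ∩ u' = ∅ := by
        apply punctured_workhorse hOopen hOz hclO hv' hu'
          (by rw [Set.union_comm]; exact hcov') (by rw [Set.inter_comm u' v'] at hd'; exact hd')
          hU hzU
        intro w hw
        exact hs (hUu ⟨⟨hw.1, hw.2.1⟩, hw.2.2⟩)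
      rw [this] at h1; exact Set.not_nonempty_empty h1
  exact hOpre.subset_connectedComponentIn (hCO hxC) hOz

/-- if `Z` is a connected metric space, `C⁺`, `C⁻` are connected
components of `Z \ {z}`, and some open neighborhood `U` of `z` satisfies
`U \ {z} ⊆ C⁺ ∪ C⁻`, then `Z \ {z} = C⁺ ∪ C⁻`. -/
theorem punctured_space_two_components
    {Z : Type*} [MetricSpace Z] [ConnectedSpace Z] (z : Z)
    (Cp Cm : Set Z)
    (hCp : ∃ x ∈ ({z}ᶜ : Set Z), Cp = connectedComponentIn {z}ᶜ x)
    (hCm : ∃ x ∈ ({z}ᶜ : Set Z), Cm = connectedComponentIn {z}ᶜ x)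
    (U : Set Z) (hU : IsOpen U) (hzU : z ∈ U)
    (hUsub : U \ {z} ⊆ Cp ∪ Cm) :
    ({z}ᶜ : Set Z) = Cp ∪ Cm := by
  obtain ⟨xp, hxp, rfl⟩ := hCp
  obtain ⟨xm, hxm, rfl⟩ := hCm
  set Cp := connectedComponentIn ({z}ᶜ : Set Z) xp with hCpdef
  set Cm := connectedComponentIn ({z}ᶜ : Set Z) xm with hCmdef
  have hCpY : Cp ⊆ ({z}ᶜ : Set Z) := connectedComponentIn_subset _ _
  have hCmY : Cm ⊆ ({z}ᶜ : Set Z) := connectedComponentIn_subset _ _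
  have hxpC : xp ∈ Cp := mem_connectedComponentIn hxp
  have hxmC : xm ∈ Cm := mem_connectedComponentIn hxm
  have hUY : U ∩ ({z}ᶜ : Set Z) ⊆ Cp ∪ Cm := by
    intro w hw
    exact hUsub ⟨hw.1, hw.2⟩
  refine Set.Subset.antisymm ?_ (Set.union_subset hCpY hCmY)
  by_cases hYpc : IsPreconnected ({z}ᶜ : Set Z)
  · intro y hy
    exact Or.inl (hYpc.subset_connectedComponentIn hxp (Set.Subset.refl _) hy)
  · rw [IsPreconnected] at hYpc
    push_neg at hYpc
    obtain ⟨u, v, hu, hv, hcov, hneu, hnev, hne⟩ := hYpc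
    have hdisj : ({z}ᶜ : Set Z) ∩ (u ∩ v) = ∅ := hne
    have hclY : closure ({z}ᶜ : Set Z) ⊆ ({z}ᶜ : Set Z) ∪ {z} := by
      intro q _
      by_cases hq : q = z
      · right; exact hq
      · left; exact hq
    have hYopen : IsOpen ({z}ᶜ : Set Z) := isOpen_compl_singleton
    have hYz : ({z}ᶜ : Set Z) ⊆ ({z}ᶜ : Set Z) := Set.Subset.refl _
    rcases punctured_side_choice (isPreconnected_connectedComponentIn) hCpY hu hv hcov hdisj with hp | hp <;>
    rcases punctured_side_choice (isPreconnected_connectedComponentIn) hCmY hu hv hcov hdisj with hm | hm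
    · -- both in u : contradiction
      exfalso
      have : ({z}ᶜ : Set Z) ∩ v = ∅ := by
        apply punctured_workhorse hYopen hYz hclY hu hv hcov hdisj hU hzU
        intro w hw
        rcases hUY ⟨hw.1, hw.2⟩ with h | h
        · exact hp h
        · exact hm h
      rw [this] at hnev; exact Set.not_nonempty_empty hnev
    · -- Cp ⊆ u, Cm ⊆ v : mixed
      have hup : ({z}ᶜ : Set Z) ∩ u ⊆ Cp := by
        apply punctured_mixed hxp hu hv hcov hdisj hU hzU hp
        intro w hw
        rcases hUY ⟨hw.1.1, hw.1.2⟩ with h | h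
        · exact h
        · exfalso
          have : w ∈ ({z}ᶜ : Set Z) ∩ (u ∩ v) := ⟨hw.1.2, hw.2, hm h⟩
          rw [hdisj] at this; exact this
      have hvm : ({z}ᶜ : Set Z) ∩ v ⊆ Cm := by
        apply punctured_mixed hxm hv hu (by rw [Set.union_comm]; exact hcov)
          (by rw [Set.inter_comm u v] at hdisj; exact hdisj) hU hzU hm
        intro w hw
        rcases hUY ⟨hw.1.1, hw.1.2⟩ with h | h
        · exfalso
          have : w ∈ ({z}ᶜ : Set Z) ∩ (u ∩ v) := ⟨hw.1.2, hp h, hw.2⟩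
          rw [hdisj] at this; exact this
        · exact h
      intro y hy
      rcases hcov hy with h | h
      · exact Or.inl (hup ⟨hy, h⟩)
      · exact Or.inr (hvm ⟨hy, h⟩)
    · -- Cp ⊆ v, Cm ⊆ u : mixed (swapped)
      have hum : ({z}ᶜ : Set Z) ∩ u ⊆ Cm := by
        apply punctured_mixed hxm hu hv hcov hdisj hU hzU hm
        intro w hw
        rcases hUY ⟨hw.1.1, hw.1.2⟩ with h | h
        · exfalso
          have : w ∈ ({z}ᶜ : Set Z) ∩ (u ∩ v) := ⟨hw.1.2, hw.2, hp h⟩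
          rw [hdisj] at this; exact this
        · exact h
      have hvp : ({z}ᶜ : Set Z) ∩ v ⊆ Cp := by
        apply punctured_mixed hxp hv hu (by rw [Set.union_comm]; exact hcov)
          (by rw [Set.inter_comm u v] at hdisj; exact hdisj) hU hzU hp
        intro w hw
        rcases hUY ⟨hw.1.1, hw.1.2⟩ with h | h
        · exact h
        · exfalso
          have : w ∈ ({z}ᶜ : Set Z) ∩ (u ∩ v) := ⟨hw.1.2, hm h, hw.2⟩
          rw [hdisj] at this; exact this
      intro y hy
      rcases hcov hy with h | h
      · exact Or.inr (hum ⟨hy, h⟩)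
      · exact Or.inl (hvp ⟨hy, h⟩)
    · -- both in v : contradiction
      exfalso
      have : ({z}ᶜ : Set Z) ∩ u = ∅ := by
        apply punctured_workhorse hYopen hYz hclY hv hu (by rw [Set.union_comm]; exact hcov)
          (by rw [Set.inter_comm u v] at hdisj; exact hdisj) hU hzU
        intro w hw
        rcases hUY ⟨hw.1, hw.2⟩ with h | h
        · exact hp h
        · exact hm h
      rw [this] at hneu; exact Set.not_nonempty_empty hneu
end

section
/- (Abstract form of Lemma A.1.) Let M be a metric space and let S ⊆ M be a closed set with the property that S ∩ D is compact for every closed bounded subset D ⊆ M. Let C be a bounded connected component of S and let δ > 0. Then there exists a bounded open set U ⊆ M such that C ⊆ U, U is contained in the open δ-neighborhood { x ∈ M : dist(x, C) < δ } of C, and the topological boundary of U is disjoint from S. -/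
open Set Metric Bornology

/-- abstract Lemma A.1: let `S` be a closed subset of a metric
space `M` whose intersection with every closed bounded set is compact. Then any
bounded connected component `C` of `S` admits, for each `δ > 0`, a bounded open
set `U` with `C ⊆ U`, `U` inside the open `δ`-neighborhood of `C`, and the
boundary of `U` disjoint from `S`. -/
theorem isolating_neighborhood_of_bounded_component
    {M : Type*} [MetricSpace M]
    (S : Set M) (hS : IsClosed S)
    (hproper : ∀ D : Set M, IsClosed D → Bornology.IsBounded D → IsCompact (S ∩ D))
    (C : Set M) (hCbdd : Bornology.IsBounded C)
    (hC : ∃ x ∈ S, C = connectedComponentIn S x)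
    (δ : ℝ) (hδ : 0 < δ) :
    ∃ U : Set M, IsOpen U ∧ Bornology.IsBounded U ∧ C ⊆ U ∧
      (∀ x ∈ U, Metric.infDist x C < δ) ∧ Disjoint (frontier U) S := by
  obtain ⟨x₀, hx₀S, hCeq⟩ := hC
  have hCne : C.Nonempty := ⟨x₀, hCeq ▸ mem_connectedComponentIn hx₀S⟩
  have hCS : C ⊆ S := hCeq ▸ connectedComponentIn_subset S x₀
  have hx₀C : x₀ ∈ C := hCeq ▸ mem_connectedComponentIn hx₀S
  -- the compact "local" ambient set K
  set D := Metric.cthickening δ C with hDdef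
  have hDclosed : IsClosed D := Metric.isClosed_cthickening
  have hKcomp : IsCompact (S ∩ D) := hproper D hDclosed hCbdd.cthickening
  set K := S ∩ D with hKdef
  have hCK : C ⊆ K := fun c hc => ⟨hCS hc, Metric.self_subset_cthickening C hc⟩
  have hx₀K : x₀ ∈ K := hCK hx₀C
  -- C is the connected component of x₀ in K
  have hcomp : connectedComponentIn K x₀ = C := by
    apply Set.Subset.antisymm
    · rw [hCeq]
      exact connectedComponentIn_mono x₀ (show K ⊆ S from fun y hy => hy.1)
    · have hCpre : IsPreconnected C := by
        rw [hCeq]; exact isPreconnected_connectedComponentIn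
      exact hCpre.subset_connectedComponentIn hx₀C hCK
  -- work in the compact subspace K
  haveI : CompactSpace K := isCompact_iff_compactSpace.mp hKcomp
  set x₀' : K := ⟨x₀, hx₀K⟩ with hx₀'def
  have himg : Subtype.val '' connectedComponent x₀' = C := by
    rw [← connectedComponentIn_eq_image hx₀K, hcomp]
  -- the open set (in K) of points δ-close to C
  set Ω : Set K := {y : K | Metric.infDist (y : M) C < δ} with hΩdef
  have hΩopen : IsOpen Ω :=
    (isOpen_lt ((Metric.continuous_infDist_pt C).comp continuous_subtype_val)
      continuous_const)
  have hccΩ : connectedComponent x₀' ⊆ Ω := by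
    intro y hy
    have : (y : M) ∈ C := himg ▸ mem_image_of_mem _ hy
    simpa [hΩdef] using lt_of_le_of_lt (le_of_eq (Metric.infDist_zero_of_mem this)) hδ
  -- find a clopen set between the component and Ω
  have hclo := connectedComponent_eq_iInter_isClopen x₀'
  have hempty : Ωᶜ ∩ ⋂ s : { s : Set K // IsClopen s ∧ x₀' ∈ s }, (s : Set K) = ∅ := by
    rw [← hclo]
    rw [eq_empty_iff_forall_notMem]
    exact fun y ⟨hy1, hy2⟩ => hy1 (hccΩ hy2)
  obtain ⟨t, ht⟩ :=
    (hΩopen.isClosed_compl.isCompact).elim_finite_subfamily_closed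
      (fun s : { s : Set K // IsClopen s ∧ x₀' ∈ s } => (s : Set K))
      (fun s => s.2.1.1) hempty
  set Z : Set K := ⋂ s ∈ t, (s : Set K) with hZdef
  have hZclopen : IsClopen Z := by
    exact isClopen_biInter_finset fun s _ => s.2.1
  have hx₀Z : x₀' ∈ Z := mem_iInter₂.mpr fun s _ => s.2.2
  have hZΩ : Z ⊆ Ω := by
    intro y hy
    by_contra hyΩ
    exact (eq_empty_iff_forall_notMem.mp ht y) ⟨hyΩ, hy⟩
  have hccZ : connectedComponent x₀' ⊆ Z := by
    rw [hclo]; exact fun y hy => mem_iInter₂.mpr fun s _ => (mem_iInter.mp hy) s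
  -- transfer to M
  set V : Set M := Subtype.val '' Z with hVdef
  have hVcomp : IsCompact V :=
    (hZclopen.1.isCompact).image continuous_subtype_val
  have hVne : V.Nonempty := ⟨x₀, ⟨x₀', hx₀Z, rfl⟩⟩
  have hCV : C ⊆ V := by
    rw [← himg]; exact image_mono hccZ
  have hVδ : ∀ v ∈ V, Metric.infDist v C < δ := by
    rintro v ⟨y, hy, rfl⟩; exact hZΩ hy
  -- the complementary part of K
  set T : Set M := Subtype.val '' (Zᶜ : Set K) with hTdef
  have hTcomp : IsCompact T :=
    (hZclopen.2.isClosed_compl.isCompact).image continuous_subtype_val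
  have hTclosed : IsClosed T := hTcomp.isClosed
  have hKVT : ∀ x ∈ K, x ∉ V → x ∈ T := by
    intro x hx hxV
    rcases (em (⟨x, hx⟩ ∈ Z)) with h | h
    · exact absurd ⟨⟨x, hx⟩, h, rfl⟩ hxV
    · exact ⟨⟨x, hx⟩, h, rfl⟩
  have hVT : ∀ v ∈ V, v ∉ T := by
    rintro v ⟨y, hy, rfl⟩ ⟨y', hy', hvy⟩
    exact hy' (by rw [show y' = y from Subtype.val_injective hvy]; exact hy)
  -- choose the radius r
  obtain ⟨r, hr0, hrT⟩ :
      ∃ r : ℝ, 0 < r ∧ ∀ x ∈ T, ∀ v ∈ V, 2 * r ≤ dist x v := by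
    rcases eq_empty_or_nonempty T with hT | hT
    · exact ⟨1, one_pos, fun x hx => absurd hx (hT ▸ notMem_empty x)⟩
    · obtain ⟨v₀, hv₀, hmin⟩ := hVcomp.exists_isMinOn hVne
        ((Metric.continuous_infDist_pt T).continuousOn)
      have hρpos : 0 < Metric.infDist v₀ T :=
        (hTclosed.notMem_iff_infDist_pos hT).mp (hVT v₀ hv₀)
      refine ⟨Metric.infDist v₀ T / 2, by linarith, fun x hx v hv => ?_⟩
      have h1 : Metric.infDist v₀ T ≤ Metric.infDist v T := hmin hv
      have h2 : Metric.infDist v T ≤ dist v x := Metric.infDist_le_dist_of_mem hx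
      rw [dist_comm]
      linarith
  -- the isolating neighborhood
  refine ⟨Metric.thickening r V ∩ Metric.thickening δ C,
    Metric.isOpen_thickening.inter Metric.isOpen_thickening,
    (hCbdd.thickening).subset inter_subset_right,
    fun c hc => ⟨Metric.self_subset_thickening hr0 V (hCV hc),
      Metric.self_subset_thickening hδ C hc⟩,
    fun x hx => (Metric.mem_thickening_iff_infDist_lt hCne).mp hx.2, ?_⟩
  rw [Set.disjoint_left]
  rintro x hxf hxS
  set U := Metric.thickening r V ∩ Metric.thickening δ C with hUdef
  have hUopen : IsOpen U := Metric.isOpen_thickening.inter Metric.isOpen_thickening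
  have hxcl : x ∈ closure U := hxf.1
  have hxU : x ∉ U := fun h => hxf.2 (by rwa [hUopen.interior_eq])
  -- x is within r of V and within δ of C (closed bounds)
  have hxV : Metric.infDist x V ≤ r := by
    have h1 : closure U ⊆ {y | Metric.infDist y V ≤ r} := by
      apply closure_minimal
      · intro y hy
        exact le_of_lt ((Metric.mem_thickening_iff_infDist_lt hVne).mp hy.1)
      · exact isClosed_le (Metric.continuous_infDist_pt V) continuous_const
    exact h1 hxcl
  have hxD : x ∈ D := by
    have h1 : closure U ⊆ Metric.cthickening δ C := by
      apply closure_minimal (fun y hy => Metric.thickening_subset_cthickening δ C hy.2)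
        Metric.isClosed_cthickening
    exact h1 hxcl
  have hxK : x ∈ K := ⟨hxS, hxD⟩
  rcases em (x ∈ V) with hxV' | hxV'
  · exact hxU ⟨Metric.self_subset_thickening hr0 V hxV',
      (Metric.mem_thickening_iff_infDist_lt hCne).mpr (hVδ x hxV')⟩
  · have hxT : x ∈ T := hKVT x hxK hxV'
    obtain ⟨v, hv, hdv⟩ := (Metric.infDist_lt_iff hVne).mp
      (show Metric.infDist x V < 2 * r by linarith)
    exact absurd hdv (not_lt.mpr (hrT x hxT v hv))
end

section
/- Let D ⊆ ℝ³ be a nonempty bounded connected open set, and let W be a continuous real-valued function on 3×3 real matrices such that W(Q) = 0 for every Q ∈ SO(3) and W(F) > 0 for every F with det F = 1 and F ∉ SO(3). Let v : ℝ³ → ℝ³ be continuous on the closure of D, vanish on the topological boundary of D, be differentiable on D with derivative ∇v extending continuously to the closure of D, and satisfy det(I + ∇v(x)) = 1 for all x ∈ D. Then ∫_D W(I + ∇v(x)) dx ≥ 0, with equality if and only if v vanishes identically on D. That is, W is strictly quasiconvex at the identity on the class of incompressible variations. -/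
open MeasureTheory Matrix

/-- A 3×3 real rotation matrix: `FᵀF = I` and `det F = 1`. -/
def IsRotation (F : Matrix (Fin 3) (Fin 3) ℝ) : Prop :=
  Fᵀ * F = 1 ∧ F.det = 1

section Aux
open Set

lemma fin3_cases (i : Fin 3) : i = 0 ∨ i = 1 ∨ i = 2 := by omega

lemma rot_col {Q : Matrix (Fin 3) (Fin 3) ℝ} (hQ : Qᵀ * Q = 1) (i : Fin 3) :
    Q 0 i ^ 2 + Q 1 i ^ 2 + Q 2 i ^ 2 = 1 := by
  have := congrFun (congrFun hQ i) i
  simpa [Matrix.mul_apply, Fin.sum_univ_three, Matrix.one_apply, sq] using this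

lemma rot_diag_le {Q : Matrix (Fin 3) (Fin 3) ℝ} (hQ : Qᵀ * Q = 1) (i : Fin 3) :
    Q i i ≤ 1 := by
  have h := rot_col hQ i
  rcases fin3_cases i with rfl | rfl | rfl <;>
    nlinarith [h, sq_nonneg (Q 0 0), sq_nonneg (Q 1 0), sq_nonneg (Q 2 0), sq_nonneg (Q 0 1),
      sq_nonneg (Q 1 1), sq_nonneg (Q 2 1), sq_nonneg (Q 0 2), sq_nonneg (Q 1 2), sq_nonneg (Q 2 2)]

lemma trace_three (Q : Matrix (Fin 3) (Fin 3) ℝ) :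
    Q.trace = Q 0 0 + Q 1 1 + Q 2 2 := by
  simp [Matrix.trace, Fin.sum_univ_three, Matrix.diag]

lemma rot_trace_le {Q : Matrix (Fin 3) (Fin 3) ℝ} (hQ : Qᵀ * Q = 1) :
    Q.trace ≤ 3 := by
  have := rot_diag_le hQ 0
  have := rot_diag_le hQ 1
  have := rot_diag_le hQ 2
  rw [trace_three]; linarith

lemma rot_trace_eq {Q : Matrix (Fin 3) (Fin 3) ℝ} (hQ : Qᵀ * Q = 1)
    (h : Q.trace = 3) : Q = 1 := by
  rw [trace_three] at h
  have l0 := rot_diag_le hQ 0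
  have l1 := rot_diag_le hQ 1
  have l2 := rot_diag_le hQ 2
  have d0 : Q 0 0 = 1 := by linarith
  have d1 : Q 1 1 = 1 := by linarith
  have d2 : Q 2 2 = 1 := by linarith
  have h0 := rot_col hQ 0
  have h1 := rot_col hQ 1
  have h2 := rot_col hQ 2
  rw [d0] at h0; rw [d1] at h1; rw [d2] at h2
  have z10 : Q 1 0 = 0 := by nlinarith [sq_nonneg (Q 1 0), sq_nonneg (Q 2 0)]
  have z20 : Q 2 0 = 0 := by nlinarith [sq_nonneg (Q 1 0), sq_nonneg (Q 2 0)]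
  have z01 : Q 0 1 = 0 := by nlinarith [sq_nonneg (Q 0 1), sq_nonneg (Q 2 1)]
  have z21 : Q 2 1 = 0 := by nlinarith [sq_nonneg (Q 0 1), sq_nonneg (Q 2 1)]
  have z02 : Q 0 2 = 0 := by nlinarith [sq_nonneg (Q 0 2), sq_nonneg (Q 1 2)]
  have z12 : Q 1 2 = 0 := by nlinarith [sq_nonneg (Q 0 2), sq_nonneg (Q 1 2)]
  ext j k
  rcases fin3_cases j with rfl | rfl | rfl <;> rcases fin3_cases k with rfl | rfl | rfl <;>
    simp_all [Matrix.one_apply, Fin.ext_iff]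


lemma eqzero_of_setIntegral_zero {E : Type*} [NormedAddCommGroup E]
    [MeasurableSpace E] [BorelSpace E] {D : Set E} (hDopen : IsOpen D)
    {μ : Measure E} [μ.IsOpenPosMeasure]
    {f : E → ℝ} (hfc : ContinuousOn f D) (hfi : IntegrableOn f D μ)
    (hf0 : ∀ x ∈ D, 0 ≤ f x) (hint : ∫ x in D, f x ∂μ = 0) : ∀ x ∈ D, f x = 0 := by
  have hae : f =ᵐ[μ.restrict D] 0 := by
    refine (MeasureTheory.integral_eq_zero_iff_of_nonneg_ae ?_ hfi).1 hint
    filter_upwards [ae_restrict_mem hDopen.measurableSet] with x hx using hf0 x hx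
  by_contra hc
  push_neg at hc
  obtain ⟨x₀, hx₀D, hx₀⟩ := hc
  have hpos : 0 < f x₀ := lt_of_le_of_ne (hf0 x₀ hx₀D) (Ne.symm hx₀)
  set U : Set E := D ∩ f ⁻¹' Set.Ioi (f x₀ / 2) with hU
  have hUopen : IsOpen U := hfc.isOpen_inter_preimage hDopen isOpen_Ioi
  have hx₀U : x₀ ∈ U := ⟨hx₀D, by simp; linarith⟩
  have hUpos : 0 < μ.restrict D U := by
    rw [Measure.restrict_apply' hDopen.measurableSet,
      Set.inter_eq_self_of_subset_left (Set.inter_subset_left)]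
    exact hUopen.measure_pos μ ⟨x₀, hx₀U⟩
  have hnull : μ.restrict D U = 0 := by
    refine measure_mono_null ?_ (ae_iff.1 hae)
    intro x hx
    have : f x₀ / 2 < f x := hx.2
    simp only [Set.mem_setOf_eq, Pi.zero_apply]
    intro h0; rw [h0] at this; linarith
  exact absurd hnull hUpos.ne'


/-- A function with vanishing derivative on a preconnected open set is constant. -/
lemma const_of_deriv_zero {E F : Type*} [NormedAddCommGroup E] [NormedSpace ℝ E]
    [NormedAddCommGroup F] [NormedSpace ℝ F] {D : Set E} (hDopen : IsOpen D) (hDconn : IsPreconnected D)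
    {v : E → F} (hder : ∀ x ∈ D, HasFDerivAt v (0 : E →L[ℝ] F) x)
    {x₀ : E} (hx₀ : x₀ ∈ D) : ∀ x ∈ D, v x = v x₀ := by
  -- locally constant on balls
  have hball : ∀ x ∈ D, ∀ ε > 0, Metric.ball x ε ⊆ D → ∀ y ∈ Metric.ball x ε, v y = v x := by
    intro x hx ε hε hsub y hy
    refine (convex_ball x ε).is_const_of_fderivWithin_eq_zero (𝕜 := ℝ)
      (fun z hz => (hder z (hsub hz)).differentiableAt.differentiableWithinAt) ?_ hy
      (Metric.mem_ball_self hε)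
    intro z hz
    rw [fderivWithin_of_isOpen Metric.isOpen_ball hz]
    exact (hder z (hsub hz)).fderiv
  set A : Set E := {x ∈ D | v x = v x₀} with hA
  have hAopen : IsOpen A := by
    rw [Metric.isOpen_iff]
    rintro x ⟨hxD, hvx⟩
    obtain ⟨ε, hε, hsub⟩ := Metric.isOpen_iff.1 hDopen x hxD
    exact ⟨ε, hε, fun y hy => ⟨hsub hy, (hball x hxD ε hε hsub y hy).trans hvx⟩⟩
  have hsub : D ⊆ A := by
    refine hDconn.subset_of_closure_inter_subset hAopen ⟨x₀, hx₀, hx₀, rfl⟩ ?_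
    rintro x ⟨hxcl, hxD⟩
    obtain ⟨ε, hε, hsub⟩ := Metric.isOpen_iff.1 hDopen x hxD
    obtain ⟨a, haA, ha⟩ := Metric.mem_closure_iff.1 hxcl ε hε
    have haB : a ∈ Metric.ball x ε := by rwa [Metric.mem_ball, dist_comm]
    refine ⟨hxD, ?_⟩
    rw [← hball x hxD ε hε hsub a haB]
    exact haA.2
  exact fun x hx => (hsub hx).2


lemma integrableOn_of_bdd {α : Type*} [MeasureSpace α] {S : Set α} {g : α → ℝ}
    (hSm : MeasurableSet S) (hvol : volume S ≠ ⊤)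
    (hgc : AEStronglyMeasurable g (volume.restrict S)) {M : ℝ}
    (hM : ∀ x ∈ S, |g x| ≤ M) : IntegrableOn g S := by
  refine Integrable.mono' (g := fun _ => M) (integrableOn_const hvol) hgc ?_
  filter_upwards [ae_restrict_mem hSm] with x hx using by simpa using hM x hx

/-- An open bounded preconnected nonempty subset of ℝ is an open interval. -/
lemma open_preconn_Ioo {C : Set ℝ} (hCo : IsOpen C) (hCc : IsPreconnected C)
    (hCb : Bornology.IsBounded C) (hne : C.Nonempty) :
    C = Set.Ioo (sInf C) (sSup C) ∧ sInf C < sSup C := by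
  obtain ⟨hbb, hba⟩ := isBounded_iff_bddBelow_bddAbove.1 hCb
  have hsub : C ⊆ Set.Ioo (sInf C) (sSup C) := by
    intro t ht
    obtain ⟨ε, hε, hball⟩ := Metric.isOpen_iff.1 hCo t ht
    have h1 : t - ε / 2 ∈ C := hball (by simp [Real.ball_eq_Ioo]; constructor <;> linarith)
    have h2 : t + ε / 2 ∈ C := hball (by simp [Real.ball_eq_Ioo]; constructor <;> linarith)
    exact ⟨lt_of_le_of_lt (csInf_le hbb h1) (by linarith),
      lt_of_lt_of_le (by linarith) (le_csSup hba h2)⟩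
  have hlt : sInf C < sSup C := by
    obtain ⟨t, ht⟩ := hne
    obtain ⟨h1, h2⟩ := hsub ht
    linarith
  refine ⟨Set.Subset.antisymm hsub ?_, hlt⟩
  rintro t ⟨h1, h2⟩
  obtain ⟨a, haC, ha⟩ := exists_lt_of_csInf_lt hne h1
  obtain ⟨b, hbC, hb⟩ := exists_lt_of_lt_csSup hne h2
  exact hCc.ordConnected.out haC hbC ⟨ha.le, hb.le⟩

/-- Each connected component of a bounded open `S ⊆ ℝ` is an interval whose
endpoints lie on the frontier of `S`. -/
lemma comp_endpoints_frontier {S : Set ℝ} (hS : IsOpen S) (hSb : Bornology.IsBounded S)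
    {t₀ : ℝ} (ht₀ : t₀ ∈ S) :
    ∃ a b : ℝ, a < b ∧ connectedComponentIn S t₀ = Set.Ioo a b ∧
      a ∈ frontier S ∧ b ∈ frontier S := by
  set C := connectedComponentIn S t₀ with hC
  have hCS : C ⊆ S := connectedComponentIn_subset S t₀
  have hCo : IsOpen C := hS.connectedComponentIn
  have hCc : IsPreconnected C := isPreconnected_connectedComponentIn
  have hne : C.Nonempty := ⟨t₀, mem_connectedComponentIn ht₀⟩
  obtain ⟨hIoo, hlt⟩ := open_preconn_Ioo hCo hCc (hSb.subset hCS) hne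
  obtain ⟨a, b, hab, hCab⟩ : ∃ a b : ℝ, a < b ∧ C = Set.Ioo a b := ⟨_, _, hlt, hIoo⟩
  have hfr : frontier S = closure S \ S := by rw [hS.frontier_eq]
  have hnotmem : ∀ c ∈ closure C, c ∉ C → c ∈ frontier S := by
    intro c hccl hcC
    rw [hfr]
    refine ⟨closure_mono hCS hccl, fun hcS => hcC ?_⟩
    set C' := connectedComponentIn S c with hC'
    have hC'o : IsOpen C' := hS.connectedComponentIn
    have hcC' : c ∈ C' := mem_connectedComponentIn hcS
    obtain ⟨ε, hε, hball⟩ := Metric.isOpen_iff.1 hC'o c hcC'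
    obtain ⟨x, hxC, hxd⟩ := Metric.mem_closure_iff.1 hccl ε hε
    have hxC' : x ∈ C' := hball (by rwa [Metric.mem_ball, dist_comm])
    have hunion : IsPreconnected (C ∪ C') :=
      hCc.union x hxC hxC' isPreconnected_connectedComponentIn
    have : C ∪ C' ⊆ C := hunion.subset_connectedComponentIn
      (Set.mem_union_left _ (mem_connectedComponentIn ht₀))
      (Set.union_subset hCS (connectedComponentIn_subset S c))
    exact this (Set.mem_union_right _ hcC')
  have hclC : closure C = Set.Icc a b := by rw [hCab, closure_Ioo hab.ne]
  refine ⟨a, b, hab, hCab, ?_, ?_⟩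
  · exact hnotmem a (by rw [hclC]; exact ⟨le_refl _, hab.le⟩) (by rw [hCab]; simp)
  · exact hnotmem b (by rw [hclC]; exact ⟨hab.le, le_refl _⟩) (by rw [hCab]; simp)

/-- Fundamental theorem of calculus on an arbitrary bounded open subset of `ℝ`,
for a function vanishing on the frontier. -/
lemma setIntegral_deriv_open_zero {S : Set ℝ} (hS : IsOpen S) (hSb : Bornology.IsBounded S)
    {f g : ℝ → ℝ} (hfc : ContinuousOn f (closure S))
    (hder : ∀ t ∈ S, HasDerivAt f (g t) t)
    (hgi : IntegrableOn g S)
    (hf0 : ∀ t ∈ frontier S, f t = 0) :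
    ∫ t in S, g t = 0 := by
  classical
  -- the set of connected components
  set 𝒞 : Set (Set ℝ) := (fun t => connectedComponentIn S t) '' S with h𝒞
  have h𝒞open : ∀ C ∈ 𝒞, IsOpen C := by
    rintro C ⟨t, htS, rfl⟩; exact hS.connectedComponentIn
  have h𝒞ne : ∀ C ∈ 𝒞, C.Nonempty := by
    rintro C ⟨t, htS, rfl⟩; exact ⟨t, mem_connectedComponentIn htS⟩
  have h𝒞disj : 𝒞.PairwiseDisjoint id := by
    rintro C ⟨s, hsS, rfl⟩ C' ⟨t, htS, rfl⟩ hne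
    refine Set.disjoint_left.2 fun x hx hx' => hne ?_
    simp only [id] at hx hx'
    show connectedComponentIn S s = connectedComponentIn S t
    exact (connectedComponentIn_eq hx).trans (connectedComponentIn_eq hx').symm
  have h𝒞count : 𝒞.Countable :=
    h𝒞disj.countable_of_isOpen (fun C hC => by simpa using h𝒞open C hC) h𝒞ne
  have h𝒞union : ⋃₀ 𝒞 = S := by
    apply Set.Subset.antisymm
    · rintro x ⟨C, ⟨t, htS, rfl⟩, hx⟩
      exact connectedComponentIn_subset S t hx
    · intro x hx
      exact ⟨connectedComponentIn S x, ⟨x, hx, rfl⟩, mem_connectedComponentIn hx⟩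
  have := h𝒞count.to_subtype
  have hUnion : ⋃ (C : 𝒞), (C : Set ℝ) = S := by
    rw [← h𝒞union]; exact (Set.sUnion_eq_iUnion).symm
  -- each component contributes zero
  have hcomp : ∀ C ∈ 𝒞, ∫ t in C, g t = 0 := by
    rintro C ⟨t₀, ht₀, rfl⟩
    obtain ⟨a, b, hab, hCab, hafr, hbfr⟩ := comp_endpoints_frontier hS hSb ht₀
    show ∫ t in connectedComponentIn S t₀, g t = 0
    rw [hCab]
    have hCsub : Set.Ioo a b ⊆ S := hCab ▸ connectedComponentIn_subset S t₀
    have hint : IntervalIntegrable g volume a b := by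
      rw [intervalIntegrable_iff_integrableOn_Ioc_of_le hab.le]
      exact (hgi.mono_set hCsub).congr_set_ae Ioo_ae_eq_Ioc.symm
    have hIcc : Set.Icc a b ⊆ closure S := by
      rw [← closure_Ioo hab.ne]
      exact closure_mono hCsub
    have hftc := intervalIntegral.integral_eq_sub_of_hasDeriv_right_of_le hab.le
      (hfc.mono hIcc)
      (fun x hx => (hder x (hCsub hx)).hasDerivWithinAt) hint
    rw [hf0 a hafr, hf0 b hbfr, sub_zero] at hftc
    rw [← MeasureTheory.integral_Ioc_eq_integral_Ioo, ← intervalIntegral.integral_of_le hab.le]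
    exact hftc
  -- sum over components
  calc ∫ t in S, g t = ∫ t in ⋃ (C : 𝒞), (C : Set ℝ), g t := by rw [hUnion]
    _ = ∑' (C : 𝒞), ∫ t in (C : Set ℝ), g t := by
        refine MeasureTheory.integral_iUnion (fun C => (h𝒞open C C.2).measurableSet) ?_ ?_
        · intro C C' hne
          exact h𝒞disj C.2 C'.2 (fun h => hne (Subtype.ext h))
        · rw [hUnion]; exact hgi
    _ = ∑' (_ : 𝒞), (0 : ℝ) := tsum_congr (fun C => hcomp C C.2)
    _ = 0 := tsum_zero

/-- The divergence-free identity: the integral over `D` of a diagonal entry of the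
gradient of a map vanishing on `∂D` is zero. -/
lemma setIntegral_diag_deriv_zero
    {D : Set (Fin 3 → ℝ)} (hDopen : IsOpen D) (hDbdd : Bornology.IsBounded D)
    {v : (Fin 3 → ℝ) → (Fin 3 → ℝ)} {Dv : (Fin 3 → ℝ) → Matrix (Fin 3) (Fin 3) ℝ}
    (hvcont : ContinuousOn v (closure D))
    (hvbdry : ∀ x ∈ frontier D, v x = 0)
    (hvderiv : ∀ x ∈ D, HasFDerivAt v (Dv x).mulVecLin.toContinuousLinearMap x)
    (hDvcont : ContinuousOn Dv (closure D))
    (i : Fin 3) :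
    ∫ x in D, Dv x i i = 0 := by
  classical
  set h : (Fin 3 → ℝ) → ℝ := fun x => Dv x i i with hh
  have happly : Continuous fun M : Matrix (Fin 3) (Fin 3) ℝ => M i i :=
    (continuous_apply i).comp (continuous_apply i)
  have hhc : ContinuousOn h (closure D) := happly.comp_continuousOn hDvcont
  have hK : IsCompact (closure D) := hDbdd.isCompact_closure
  obtain ⟨M, hM⟩ := hK.exists_bound_of_continuousOn hhc
  have hvolD : volume D ≠ ⊤ :=
    (lt_of_le_of_lt (measure_mono subset_closure) hK.measure_lt_top).ne
  have hhmeas : AEStronglyMeasurable h (volume.restrict D) :=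
    (hhc.mono subset_closure).aestronglyMeasurable hDopen.measurableSet
  have hhi : IntegrableOn h D :=
    integrableOn_of_bdd hDopen.measurableSet hvolD hhmeas
      (fun x hx => by simpa using hM x (subset_closure hx))
  have hF : Integrable (D.indicator h) :=
    hhi.integrable_indicator hDopen.measurableSet
  set e : ℝ × (Fin 2 → ℝ) ≃ᵐ (Fin 3 → ℝ) :=
    (MeasurableEquiv.piFinSuccAbove (fun _ : Fin 3 => ℝ) i).symm with he
  have hem : MeasurePreserving e :=
    (volume_preserving_piFinSuccAbove (fun _ : Fin 3 => ℝ) i).symm _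
  have hesymm : ∀ (t : ℝ) (y : Fin 2 → ℝ), e (t, y) = i.insertNth t y := by
    intro t y
    simp [he, MeasurableEquiv.piFinSuccAbove, Fin.insertNthEquiv]
  -- bound for the boundedness of the slices
  obtain ⟨R, hR⟩ := isBounded_iff_forall_norm_le.1 hDbdd
  -- transfer the integral to the product space
  have step1 : ∫ x in D, h x = ∫ z : ℝ × (Fin 2 → ℝ), D.indicator h (e z) := by
    rw [← MeasureTheory.integral_indicator hDopen.measurableSet, ← hem.map_eq,
      integral_map_equiv]
  have hFe : Integrable (fun z => D.indicator h (e z)) (volume : Measure (ℝ × (Fin 2 → ℝ))) := by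
    rw [← hem.map_eq] at hF
    exact (integrable_map_equiv e (D.indicator h)).1 hF
  rw [step1, Measure.volume_eq_prod, integral_prod_symm _ (by rwa [← Measure.volume_eq_prod])]
  -- the inner integral vanishes for every `y`
  have hinner : ∀ y : Fin 2 → ℝ, ∫ t : ℝ, D.indicator h (e (t, y)) = 0 := by
    intro y
    set γ : ℝ → (Fin 3 → ℝ) := fun t => i.insertNth t y with hγdef
    have hγeq : ∀ t, γ t = (i.insertNth (0:ℝ) y : Fin 3 → ℝ) + t • (Pi.single i 1 : Fin 3 → ℝ) := by
      intro t
      ext j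
      refine Fin.succAboveCases i ?_ ?_ j
      · simp [hγdef]
      · intro k
        simp [hγdef, Fin.insertNth_apply_succAbove,
          Pi.single_eq_of_ne (Fin.succAbove_ne i k)]
    have hγc : Continuous γ := by
      rw [funext hγeq]
      exact continuous_const.add (continuous_id.smul continuous_const)
    have hγd : ∀ t, HasDerivAt γ (Pi.single i 1) t := by
      intro t
      rw [funext hγeq]
      simpa using ((hasDerivAt_id t).smul_const (Pi.single i (1 : ℝ))).const_add
        (i.insertNth (0:ℝ) y : Fin 3 → ℝ)
    set S : Set ℝ := γ ⁻¹' D with hSdef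
    have hSopen : IsOpen S := hDopen.preimage hγc
    have hSb : Bornology.IsBounded S := by
      refine (Metric.isBounded_Icc (-R) R).subset fun t ht => ?_
      have h1 : ‖γ t‖ ≤ R := hR _ ht
      have h2 : |t| ≤ ‖γ t‖ := by
        have := norm_le_pi_norm (γ t) i
        simpa [hγdef, Fin.insertNth_apply_same] using this
      rw [Set.mem_Icc]
      constructor <;> [linarith [neg_abs_le t]; linarith [le_abs_self t]]
    have hmapsclos : ∀ t ∈ closure S, γ t ∈ closure D := fun t ht =>
      hγc.closure_preimage_subset D ht
    have hfc' : ContinuousOn (fun t => v (γ t) i) (closure S) :=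
      (continuous_apply i).comp_continuousOn
        (hvcont.comp hγc.continuousOn hmapsclos)
    have hfront : ∀ t ∈ frontier S, γ t ∈ frontier D := by
      intro t ht
      rw [hSopen.frontier_eq] at ht
      rw [hDopen.frontier_eq]
      exact ⟨hmapsclos t ht.1, ht.2⟩
    have hder : ∀ t ∈ S, HasDerivAt (fun t => v (γ t) i) (h (γ t)) t := by
      intro t ht
      have hcomp := (hvderiv (γ t) ht).comp_hasDerivAt t (hγd t)
      have := hasDerivAt_pi.1 hcomp i
      simpa [hh, LinearMap.coe_toContinuousLinearMap', Matrix.mulVecLin_apply] using this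
    have hgi : IntegrableOn (fun t => h (γ t)) S := by
      refine integrableOn_of_bdd hSopen.measurableSet ?_ ?_ (M := M) ?_
      · have hsub : S ⊆ Set.Icc (-R) R := fun t (ht : t ∈ S) => by
          have h1 : ‖γ t‖ ≤ R := hR _ ht
          have h2 : |t| ≤ ‖γ t‖ := by
            have := norm_le_pi_norm (γ t) i
            simpa [hγdef, Fin.insertNth_apply_same] using this
          exact Set.mem_Icc.2 ⟨by linarith [neg_abs_le t], by linarith [le_abs_self t]⟩
        exact ((measure_mono hsub).trans_lt (by simp : volume (Set.Icc (-R) R) < ⊤)).ne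
      · exact (hhc.comp hγc.continuousOn (fun t (ht : t ∈ S) =>
          subset_closure ht)).aestronglyMeasurable hSopen.measurableSet
      · intro t ht
        simpa using hM (γ t) (subset_closure (ht : γ t ∈ D))
    have hzero := setIntegral_deriv_open_zero hSopen hSb hfc'
      hder hgi (fun t ht => by rw [hvbdry (γ t) (hfront t ht)]; rfl)
    calc ∫ t : ℝ, D.indicator h (e (t, y))
        = ∫ t : ℝ, S.indicator (fun t => h (γ t)) t := by
          refine integral_congr_ae (Filter.Eventually.of_forall fun t => ?_)
          show D.indicator h (e (t, y)) = S.indicator (fun t => h (γ t)) t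
          rw [hesymm t y]
          exact (Set.indicator_comp_right γ (s := D) (g := h) (x := t)).symm
      _ = ∫ t in S, h (γ t) := integral_indicator hSopen.measurableSet
      _ = 0 := hzero
  calc ∫ y, ∫ t, D.indicator h (e (t, y)) = ∫ y : Fin 2 → ℝ, (0 : ℝ) := by
        refine integral_congr_ae (Filter.Eventually.of_forall fun y => hinner y)
    _ = 0 := integral_zero _ _
end Aux

/-- a stored-energy density `W` with a strict global minimum at
the stress-free state among volume-preserving gradients is strictly quasiconvex
at the identity over incompressible variations: `∫_D W(I + ∇v) ≥ 0`, with
equality iff `v ≡ 0` on `D`. -/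
theorem strict_quasiconvexity_at_identity
    (D : Set (Fin 3 → ℝ)) (hDne : D.Nonempty) (hDopen : IsOpen D)
    (hDbdd : Bornology.IsBounded D) (hDconn : IsConnected D)
    (W : Matrix (Fin 3) (Fin 3) ℝ → ℝ) (hWcont : Continuous W)
    (hW0 : ∀ Q, IsRotation Q → W Q = 0)
    (hWpos : ∀ F : Matrix (Fin 3) (Fin 3) ℝ, F.det = 1 → ¬ IsRotation F → 0 < W F)
    (v : (Fin 3 → ℝ) → (Fin 3 → ℝ))
    (Dv : (Fin 3 → ℝ) → Matrix (Fin 3) (Fin 3) ℝ)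
    (hvcont : ContinuousOn v (closure D))
    (hvbdry : ∀ x ∈ frontier D, v x = 0)
    (hvderiv : ∀ x ∈ D, HasFDerivAt v (Dv x).mulVecLin.toContinuousLinearMap x)
    (hDvcont : ContinuousOn Dv (closure D))
    (hinc : ∀ x ∈ D, (1 + Dv x).det = 1) :
    (0 ≤ ∫ x in D, W (1 + Dv x)) ∧
      ((∫ x in D, W (1 + Dv x)) = 0 ↔ ∀ x ∈ D, v x = 0) := by
  classical
  have hK : IsCompact (closure D) := hDbdd.isCompact_closure
  have hvolD : volume D ≠ ⊤ :=
    (lt_of_le_of_lt (measure_mono subset_closure) hK.measure_lt_top).ne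
  set φ : (Fin 3 → ℝ) → ℝ := fun x => W (1 + Dv x) with hφdef
  have hφc : ContinuousOn φ (closure D) :=
    hWcont.comp_continuousOn (continuousOn_const.add hDvcont)
  obtain ⟨Mφ, hMφ⟩ := hK.exists_bound_of_continuousOn hφc
  have hφi : IntegrableOn φ D :=
    integrableOn_of_bdd hDopen.measurableSet hvolD
      ((hφc.mono subset_closure).aestronglyMeasurable hDopen.measurableSet)
      (fun x hx => by simpa using hMφ x (subset_closure hx))
  have hφ0 : ∀ x ∈ D, 0 ≤ φ x := by
    intro x hx
    by_cases hrot : IsRotation (1 + Dv x)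
    · rw [hφdef]; simp only; rw [hW0 _ hrot]
    · exact (hWpos _ (hinc x hx) hrot).le
  refine ⟨setIntegral_nonneg hDopen.measurableSet hφ0, ?_, ?_⟩
  · -- equality implies v ≡ 0
    intro hint
    have hφzero : ∀ x ∈ D, φ x = 0 :=
      eqzero_of_setIntegral_zero hDopen (hφc.mono subset_closure) hφi hφ0 hint
    have hrot : ∀ x ∈ D, IsRotation (1 + Dv x) := by
      intro x hx
      by_contra hr
      exact (hWpos _ (hinc x hx) hr).ne' (hφzero x hx)
    -- the function -trace (Dv x) is nonnegative with zero integral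
    set ψ : (Fin 3 → ℝ) → ℝ := fun x => -(Dv x 0 0) + (-(Dv x 1 1) + -(Dv x 2 2)) with hψdef
    have hdiagc : ∀ i : Fin 3, ContinuousOn (fun x => Dv x i i) (closure D) := by
      intro i
      have happly : Continuous fun M : Matrix (Fin 3) (Fin 3) ℝ => M i i :=
        (continuous_apply i).comp (continuous_apply i)
      exact happly.comp_continuousOn hDvcont
    have hdiagi : ∀ i : Fin 3, IntegrableOn (fun x => Dv x i i) D := by
      intro i
      obtain ⟨M, hM⟩ := hK.exists_bound_of_continuousOn (hdiagc i)
      exact integrableOn_of_bdd hDopen.measurableSet hvolD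
        (((hdiagc i).mono subset_closure).aestronglyMeasurable hDopen.measurableSet)
        (fun x hx => by simpa using hM x (subset_closure hx))
    have hψc : ContinuousOn ψ (closure D) :=
      ((hdiagc 0).neg).add (((hdiagc 1).neg).add ((hdiagc 2).neg))
    have hψi : IntegrableOn ψ D :=
      ((hdiagi 0).neg).add (((hdiagi 1).neg).add ((hdiagi 2).neg))
    have htrace : ∀ x, (1 + Dv x).trace = 3 + (Dv x).trace := by
      intro x
      rw [Matrix.trace_add, Matrix.trace_one]
      norm_num
    have hψ0 : ∀ x ∈ D, 0 ≤ ψ x := by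
      intro x hx
      have h3 := rot_trace_le (hrot x hx).1
      rw [htrace x, trace_three] at h3
      rw [hψdef]
      simp only
      linarith
    have hψint : ∫ x in D, ψ x = 0 := by
      have h0 := setIntegral_diag_deriv_zero hDopen hDbdd hvcont hvbdry hvderiv hDvcont 0
      have h1 := setIntegral_diag_deriv_zero hDopen hDbdd hvcont hvbdry hvderiv hDvcont 1
      have h2 := setIntegral_diag_deriv_zero hDopen hDbdd hvcont hvbdry hvderiv hDvcont 2
      have i0 : IntegrableOn (fun x => -Dv x 0 0) D := (hdiagi 0).neg
      have i1 : IntegrableOn (fun x => -Dv x 1 1) D := (hdiagi 1).neg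
      have i2 : IntegrableOn (fun x => -Dv x 2 2) D := (hdiagi 2).neg
      have i12 : IntegrableOn (fun x => -Dv x 1 1 + -Dv x 2 2) D := i1.add i2
      have key : ∫ x in D, (-Dv x 0 0 + (-Dv x 1 1 + -Dv x 2 2)) = 0 := by
        rw [integral_add i0 i12, integral_add i1 i2,
          integral_neg, integral_neg, integral_neg, h0, h1, h2]
        norm_num
      exact key
    have hψzero : ∀ x ∈ D, ψ x = 0 :=
      eqzero_of_setIntegral_zero hDopen (hψc.mono subset_closure) hψi hψ0 hψint
    -- hence Dv x = 0 on D
    have hDvzero : ∀ x ∈ D, HasFDerivAt v (0 : (Fin 3 → ℝ) →L[ℝ] (Fin 3 → ℝ)) x := by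
      intro x hx
      have htr : (1 + Dv x).trace = 3 := by
        have hz := hψzero x hx
        rw [hψdef] at hz
        simp only at hz
        rw [htrace x, trace_three]
        linarith
      have hone : 1 + Dv x = 1 := rot_trace_eq (hrot x hx).1 htr
      have hDv0 : Dv x = 0 := by
        have := congrArg (fun M => M - 1) hone
        simpa [add_sub_cancel_left] using this
      have := hvderiv x hx
      rw [hDv0] at this
      simpa using this
    -- v is constant on D, and vanishes near the frontier
    obtain ⟨x₀, hx₀⟩ := hDne
    have hconst := const_of_deriv_zero hDopen hDconn.isPreconnected hDvzero hx₀
    have hclos : ∀ z ∈ closure D, v z = v x₀ := by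
      intro z hz
      have h1 : ContinuousWithinAt v (closure D) z := hvcont z hz
      have hD_nhds : (nhdsWithin z D).NeBot := mem_closure_iff_nhdsWithin_neBot.1 hz
      have h2 : Filter.Tendsto v (nhdsWithin z D) (nhds (v z)) :=
        h1.mono_left (nhdsWithin_mono z subset_closure)
      have h3 : Filter.Tendsto v (nhdsWithin z D) (nhds (v x₀)) := by
        refine Filter.Tendsto.congr' ?_ tendsto_const_nhds
        filter_upwards [self_mem_nhdsWithin] with w hw using (hconst w hw).symm
      exact tendsto_nhds_unique h2 h3
    have hfr_ne : (frontier D).Nonempty := by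
      rw [Set.nonempty_iff_ne_empty]
      intro hfe
      have hclopen : IsClopen D := isClopen_iff_frontier_eq_empty.2 hfe
      rcases isClopen_iff.1 hclopen with h | h
      · exact absurd (h ▸ hx₀) (Set.notMem_empty x₀)
      · rw [h] at hDbdd
        have : CompactSpace (Fin 3 → ℝ) := Metric.compactSpace_iff_isBounded_univ.2 hDbdd
        exact absurd this (not_compactSpace_iff.2 inferInstance)
    obtain ⟨z, hz⟩ := hfr_ne
    have hv₀ : v x₀ = 0 := by
      rw [← hclos z (frontier_subset_closure hz), hvbdry z hz]
    exact fun x hx => (hconst x hx).trans hv₀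
  · -- v ≡ 0 implies equality
    intro hv0
    have hφeq : ∀ x ∈ D, φ x = 0 := by
      intro x hx
      have h1 := hvderiv x hx
      have h2 : HasFDerivAt v (0 : (Fin 3 → ℝ) →L[ℝ] (Fin 3 → ℝ)) x := by
        have hev : v =ᶠ[nhds x] (fun _ => (0 : Fin 3 → ℝ)) := by
          filter_upwards [hDopen.mem_nhds hx] with w hw using hv0 w hw
        exact (hasFDerivAt_const (0 : Fin 3 → ℝ) x).congr_of_eventuallyEq hev
      have heq := h1.unique h2
      have happ : ∀ u, (Dv x).mulVec u = 0 := by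
        intro u
        have := congrFun (congrArg DFunLike.coe heq) u
        simpa [Matrix.mulVecLin_apply] using this
      have hDv0 : Dv x = 0 := by
        ext j k
        have := congrFun (happ (Pi.single k 1)) j
        simpa using this
      rw [hφdef]
      simp only
      rw [hDv0, add_zero]
      exact hW0 1 ⟨by simp, by simp⟩
    rw [show (∫ x in D, W (1 + Dv x)) = ∫ x in D, φ x from rfl,
      setIntegral_congr_fun hDopen.measurableSet hφeq, integral_zero]
end
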